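/- arXiv:0803.1868 — 2 statements merged into one kernel-verified Lean document; each statement's English description precedes it below -/
import Mathlib

section
/- For a single integer a ≥ 1 with squarefree part A: (1/x)·∑_{n≤x} f_a(n) = ∏_{p^α ∥ a} ( (1/p)(1 − 1/p)^α + (−1/p)^α (1 − 1/p) ) + O(τ(A)^2 / x), where the product is over prime powers exactly dividing a and τ(A) is the number of divisors of A. In particular the main term vanishes unless a is squarefull. -/
/-!
Write `fp p n ^ α = j_α(p) [p ∣ n] + c_α(p)`, where `c_α(p) = (-1/p)^α` (`fpPowOff`) and
`j_α(p) = (1 - 1/p)^α - (-1/p)^α` (`fpPowJump`). Expanding the product over `p ∣ a` writes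
`f_a(n)` as a sum, over the sets `t` of primes dividing `a`, of weights `w(t)` (`fmWeight`)
with `|w(t)| ≤ 1` times the indicator of `∏ t ∣ n`. Summing over `n ≤ x` replaces each
indicator by `⌊x / ∏ t⌋ = x / ∏ t + O(1)`, and the terms `x w(t) / ∏ t` recombine into `x`
times the product of the local factors `j_α(p) / p + c_α(p)`. There are `2^ω(a) ≤ τ(A)` sets
`t`, which gives the error term. For `α = 1` the local factor is
`(1/p)(1 - 1/p) - (1/p)(1 - 1/p) = 0`.
-/

open Finset

/-- f_p(n) = 1 - 1/p if p ∣ n, and -1/p otherwise. -/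
noncomputable def fp (p n : ℕ) : ℝ := if p ∣ n then 1 - 1 / (p : ℝ) else -(1 / (p : ℝ))

/-- Multiplicative extension of f to all positive integers in the first argument. -/
noncomputable def fm (a n : ℕ) : ℝ := ∏ p ∈ a.primeFactors, (fp p n) ^ (a.factorization p)

noncomputable def fpPowOff (p α : ℕ) : ℝ := (-(1 / (p : ℝ))) ^ α

noncomputable def fpPowJump (p α : ℕ) : ℝ := (1 - 1 / (p : ℝ)) ^ α - (-(1 / (p : ℝ))) ^ α

noncomputable def fmWeight (a : ℕ) (t : Finset ℕ) : ℝ :=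
  (∏ p ∈ t, fpPowJump p (a.factorization p)) *
    ∏ p ∈ a.primeFactors \ t, fpPowOff p (a.factorization p)

noncomputable def localFactor (p α : ℕ) : ℝ :=
  (1 / (p : ℝ)) * (1 - 1 / (p : ℝ)) ^ α + (-(1 / (p : ℝ))) ^ α * (1 - 1 / (p : ℝ))

lemma fp_pow_eq (p n α : ℕ) :
    fp p n ^ α = fpPowJump p α * (if p ∣ n then 1 else 0) + fpPowOff p α := by
  by_cases h : p ∣ n <;> simp [fp, fpPowOff, fpPowJump, h]

lemma prod_dvd_iff_of_prime {t : Finset ℕ} (ht : ∀ p ∈ t, p.Prime) (n : ℕ) :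
    (∏ p ∈ t, p) ∣ n ↔ ∀ p ∈ t, p ∣ n :=
  ⟨fun h _ hp => (dvd_prod_of_mem _ hp).trans h,
    prod_primes_dvd n fun p hp => (ht p hp).prime⟩

lemma fm_eq_sum_powerset (a n : ℕ) :
    fm a n = ∑ t ∈ a.primeFactors.powerset,
      fmWeight a t * if (∏ p ∈ t, p) ∣ n then 1 else 0 := by
  rw [fm, prod_congr rfl fun p _ => fp_pow_eq p n _, prod_add]
  refine sum_congr rfl fun t ht => ?_
  have ht_prime p (hp : p ∈ t) : p.Prime := Nat.prime_of_mem_primeFactors (mem_powerset.mp ht hp)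
  simp only [prod_mul_distrib, prod_boole, fmWeight, prod_dvd_iff_of_prime ht_prime]
  ring

lemma sum_Icc_fm (a N : ℕ) :
    ∑ n ∈ Icc 1 N, fm a n
      = ∑ t ∈ a.primeFactors.powerset, fmWeight a t * ((N / ∏ p ∈ t, p : ℕ) : ℝ) := by
  simp_rw [fm_eq_sum_powerset]
  rw [sum_comm]
  refine sum_congr rfl fun t _ => ?_
  rw [← mul_sum, sum_boole, show Icc 1 N = Ioc 0 N from rfl, Nat.Ioc_filter_dvd_card_eq_div]

lemma prod_localFactor_eq_sum_powerset (a : ℕ) :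
    ∏ p ∈ a.primeFactors, localFactor p (a.factorization p)
      = ∑ t ∈ a.primeFactors.powerset, fmWeight a t / ((∏ p ∈ t, p : ℕ) : ℝ) := by
  have h_local (p : ℕ) : localFactor p (a.factorization p)
      = fpPowJump p (a.factorization p) * (1 / p) + fpPowOff p (a.factorization p) := by
    simp only [localFactor, fpPowJump, fpPowOff]
    ring
  rw [prod_congr rfl fun p _ => h_local p, prod_add]
  refine sum_congr rfl fun t _ => ?_
  rw [prod_mul_distrib, fmWeight, Nat.cast_prod, prod_div_distrib, prod_const_one]
  ring

lemma abs_one_sub_pow_sub_neg_pow_le_one {u : ℝ} (hu₀ : 0 ≤ u) (hu₁ : u ≤ 1) {α : ℕ}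
    (hα : α ≠ 0) : |(1 - u) ^ α - (-u) ^ α| ≤ 1 := calc
  |(1 - u) ^ α - (-u) ^ α| ≤ (1 - u) ^ α + u ^ α := by
    refine (abs_sub _ _).trans_eq ?_
    rw [abs_pow, abs_pow, abs_neg, abs_of_nonneg hu₀, abs_of_nonneg (by linarith)]
  _ ≤ (1 - u) + u := by
    gcongr
    · exact pow_le_of_le_one (by linarith) (by linarith) hα
    · exact pow_le_of_le_one hu₀ hu₁ hα
  _ = 1 := by ring

lemma abs_fmWeight_le_one {a : ℕ} {t : Finset ℕ} (ht : t ⊆ a.primeFactors) :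
    |fmWeight a t| ≤ 1 := by
  have h_inv p (hp : p ∈ a.primeFactors) : 0 ≤ 1 / (p : ℝ) ∧ 1 / (p : ℝ) ≤ 1 :=
    ⟨by positivity, div_le_one_of_le₀ (mod_cast (Nat.prime_of_mem_primeFactors hp).one_le)
      (Nat.cast_nonneg p)⟩
  have h_off p (hp : p ∈ a.primeFactors) : |fpPowOff p (a.factorization p)| ≤ 1 := by
    rw [fpPowOff, abs_pow, abs_neg, abs_of_nonneg (h_inv p hp).1]
    exact pow_le_one₀ (h_inv p hp).1 (h_inv p hp).2
  have h_jump p (hp : p ∈ a.primeFactors) : |fpPowJump p (a.factorization p)| ≤ 1 :=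
    abs_one_sub_pow_sub_neg_pow_le_one (h_inv p hp).1 (h_inv p hp).2
      (Finsupp.mem_support_iff.mp (by rwa [Nat.support_factorization]))
  rw [fmWeight, abs_mul, abs_prod, abs_prod]
  exact mul_le_one₀ (prod_le_one (fun _ _ => abs_nonneg _) fun p hp => h_jump p (ht hp))
    (prod_nonneg fun _ _ => abs_nonneg _)
    (prod_le_one (fun _ _ => abs_nonneg _) fun p hp => h_off p (mem_sdiff.mp hp).1)

lemma abs_natFloor_div_sub_div_le_one {x : ℝ} (hx : 0 ≤ x) (d : ℕ) :
    |((⌊x⌋₊ / d : ℕ) : ℝ) - x / d| ≤ 1 := by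
  rw [← Nat.floor_div_natCast, abs_sub_comm,
    abs_of_nonneg (sub_nonneg.mpr (Nat.floor_le (by positivity)))]
  linarith [Nat.lt_floor_add_one (x / d)]

lemma two_pow_card_le_card_divisors_prod {s : Finset ℕ} (hs : ∀ p ∈ s, p.Prime) :
    2 ^ #s ≤ #(∏ p ∈ s, p).divisors := by
  rw [← card_powerset]
  refine card_le_card_of_injOn (fun t => ∏ p ∈ t, p) (fun t ht => ?_) fun t ht u hu htu => ?_
  · have hts : t ⊆ s := mem_powerset.mp ht
    exact Nat.mem_divisors.mpr ⟨prod_dvd_prod_of_subset t s _ hts,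
      prod_ne_zero_iff.mpr fun p hp => (hs p hp).ne_zero⟩
  · rw [← Nat.primeFactors_prod fun p hp => hs p (mem_powerset.mp ht hp),
      ← Nat.primeFactors_prod fun p hp => hs p (mem_powerset.mp hu hp)]
    exact congrArg Nat.primeFactors htu

lemma abs_average_fm_sub_prod_localFactor_le (a : ℕ) {x : ℝ} (hx : 0 < x) :
    |(1 / x) * ∑ n ∈ Icc 1 ⌊x⌋₊, fm a n
        - ∏ p ∈ a.primeFactors, localFactor p (a.factorization p)| ≤ 2 ^ #a.primeFactors / x := by
  rw [sum_Icc_fm, prod_localFactor_eq_sum_powerset, mul_sum, ← sum_sub_distrib]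
  have h_term t (ht : t ∈ a.primeFactors.powerset) :
      |1 / x * (fmWeight a t * ((⌊x⌋₊ / ∏ p ∈ t, p : ℕ) : ℝ))
          - fmWeight a t / ((∏ p ∈ t, p : ℕ) : ℝ)| ≤ 1 / x := calc
    _ = |fmWeight a t| *
          |((⌊x⌋₊ / ∏ p ∈ t, p : ℕ) : ℝ) - x / ((∏ p ∈ t, p : ℕ) : ℝ)| / x := by
      rw [← abs_mul, ← abs_of_pos hx, ← abs_div, abs_of_pos hx]
      congr 1
      field_simp
    _ ≤ 1 * 1 / x := by
      gcongr
      · exact abs_fmWeight_le_one (mem_powerset.mp ht)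
      · exact abs_natFloor_div_sub_div_le_one hx.le _
    _ = 1 / x := by ring
  calc _ ≤ ∑ t ∈ a.primeFactors.powerset, 1 / x :=
        (abs_sum_le_sum_abs _ _).trans (sum_le_sum h_term)
    _ = 2 ^ #a.primeFactors / x := by
      rw [sum_const, card_powerset, nsmul_eq_mul]
      push_cast
      ring

lemma localFactor_one (p : ℕ) : localFactor p 1 = 0 := by
  rw [localFactor]
  ring

/-- (1/x)∑_{n≤x} f_a(n) = ∏_{p^α ∥ a} ((1/p)(1-1/p)^α + (-1/p)^α(1-1/p)) + O(τ(A)²/x),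
with an absolute implied constant; and the main term vanishes unless a is squarefull. -/
theorem stmt7 :
    (∃ C : ℝ, ∀ a : ℕ, 1 ≤ a → ∀ x : ℝ, 1 ≤ x →
      |(1/x) * ∑ n ∈ Finset.Icc 1 ⌊x⌋₊, fm a n
        - ∏ p ∈ a.primeFactors,
            ((1/(p:ℝ)) * (1 - 1/(p:ℝ)) ^ (a.factorization p)
              + (-(1/(p:ℝ))) ^ (a.factorization p) * (1 - 1/(p:ℝ)))|
        ≤ C * (((∏ p ∈ a.primeFactors, p).divisors.card : ℝ))^2 / x)
    ∧ ∀ a : ℕ, 1 ≤ a → (∃ p : ℕ, p.Prime ∧ p ∣ a ∧ ¬ p^2 ∣ a) →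
      ∏ p ∈ a.primeFactors,
          ((1/(p:ℝ)) * (1 - 1/(p:ℝ)) ^ (a.factorization p)
            + (-(1/(p:ℝ))) ^ (a.factorization p) * (1 - 1/(p:ℝ))) = 0 := by
  refine ⟨⟨1, fun a _ x hx => ?_⟩, fun a ha ⟨p, hp, hpa, hp2⟩ => ?_⟩
  · have h_card : (2 : ℝ) ^ #a.primeFactors ≤ #(∏ p ∈ a.primeFactors, p).divisors :=
      mod_cast two_pow_card_le_card_divisors_prod fun p => Nat.prime_of_mem_primeFactors
    have h_one : (1 : ℝ) ≤ 2 ^ #a.primeFactors := one_le_pow₀ one_le_two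
    refine (abs_average_fm_sub_prod_localFactor_le a (by linarith)).trans ?_
    rw [one_mul]
    gcongr
    nlinarith
  · have ha₀ : a ≠ 0 := Nat.one_le_iff_ne_zero.mp ha
    have h_mult : a.factorization p = 1 := by
      have h_pos := hp.factorization_pos_of_dvd ha₀ hpa
      have h_lt : ¬ 2 ≤ a.factorization p :=
        fun h => hp2 ((hp.pow_dvd_iff_le_factorization ha₀).mpr h)
      omega
    refine prod_eq_zero (Nat.mem_primeFactors.mpr ⟨hp, hpa, ha₀⟩) ?_
    rw [h_mult]
    exact localFactor_one p
end

section
/- Let a_1, …, a_r be pairwise coprime positive integers with squarefree parts A_1, …, A_r, and let b_1 < … < b_r be integers. Then (1/x)·∑_{n≤x} ∏_{i=1}^r f_{a_i}(n + b_i) = ∏_{i=1}^r ∏_{p^α ∥ a_i} ( (1/p)(1 − 1/p)^α + (−1/p)^α (1 − 1/p) ) + O( (1/x)·∏_{i=1}^r τ(A_i)^2 ), where the implied constant depends only on r. -/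
open Finset

open scoped Function

/-!
Write `f_{p^α}(n) = 𝟙[p ∣ n] (U - V) + V` with `U = (1 - 1/p)^α` and `V = (-1/p)^α`. Expanding
the product over all pairs `(i, p)` with `p ∣ aᵢ` gives a sum over sets `T` of such pairs,
weighted by the number of `n ≤ x` with `p ∣ n + bᵢ` for all `(i, p) ∈ T`. The primes of
different `aᵢ` are distinct, so by the Chinese remainder theorem this is one congruence modulo
`D_T = ∏_{(i, p) ∈ T} p`, satisfied by `x / D_T + O(1)` of the `n ≤ x`. The main terms
reassemble into `∏ (U/p + V (1 - 1/p))`, and the errors add up to at most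
`2 ∏ (|U - V| + |V|) ≤ 2 · 3^{∑ ω(aᵢ)} ≤ 2 ∏ τ(Aᵢ)²`.
-/

theorem card_filter_dvd_add_Icc (D t N : ℕ) :
    #{n ∈ Icc 1 N | D ∣ n + t} = (N + t) / D - t / D := by
  have hshift : #{n ∈ Icc 1 N | D ∣ n + t} = #{m ∈ Ioc t (N + t) | D ∣ m} := by
    refine card_nbij (· + t) (fun n hn => ?_) (fun _ _ _ _ h => add_right_cancel h)
      (fun m hm => ?_)
    · simp only [mem_coe, mem_filter, mem_Icc, mem_Ioc] at hn ⊢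
      omega
    · simp only [mem_coe, mem_filter, mem_Ioc, Set.mem_image, mem_Icc] at hm ⊢
      exact ⟨m - t, ⟨by omega, by rw [Nat.sub_add_cancel hm.1.1.le]; exact hm.2⟩, by omega⟩
  have hsplit : #{m ∈ Ioc 0 t | D ∣ m} + #{m ∈ Ioc t (N + t) | D ∣ m}
      = #{m ∈ Ioc 0 (N + t) | D ∣ m} := by
    rw [← card_union_of_disjoint (disjoint_filter_filter (Ioc_disjoint_Ioc_of_le le_rfl)),
      ← filter_union, Ioc_union_Ioc_eq_Ioc (Nat.zero_le t) (Nat.le_add_left t N)]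
  rw [Nat.Ioc_filter_dvd_card_eq_div, Nat.Ioc_filter_dvd_card_eq_div] at hsplit
  omega

theorem abs_card_filter_dvd_add_Icc_floor_sub_le {D : ℕ} (hD : 0 < D) (t : ℕ) {x : ℝ}
    (hx : 0 ≤ x) : |(#{n ∈ Icc 1 ⌊x⌋₊ | D ∣ n + t} : ℝ) - x / D| ≤ 2 := by
  set N := ⌊x⌋₊
  have hdiv (a : ℕ) : (a : ℝ) / D - 1 < ((a / D : ℕ) : ℝ) ∧ ((a / D : ℕ) : ℝ) ≤ a / D :=
    ⟨by simpa only [Nat.floor_div_eq_div] using Nat.sub_one_lt_floor ((a : ℝ) / D),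
      Nat.cast_div_le⟩
  have hD1 : (1 : ℝ) ≤ D := by exact_mod_cast hD
  have hxN : (N : ℝ) / D ≤ x / D := by gcongr; exact Nat.floor_le hx
  have hxN' : x / D - N / D < 1 := by
    rw [← sub_div, div_lt_one (by positivity)]
    linarith [Nat.lt_floor_add_one x]
  rw [card_filter_dvd_add_Icc, Nat.cast_sub (Nat.div_le_div_right (Nat.le_add_left t N))]
  have h1 := hdiv (N + t)
  have h2 := hdiv t
  push_cast at h1
  rw [add_div] at h1
  rw [abs_le]
  constructor <;> linarith [h1.1, h1.2, h2.1, h2.2]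

theorem exists_forall_dvd_add_iff_prod_dvd_add {ι : Type*} {s : Finset ι} {m : ι → ℕ}
    (hm : ∀ i ∈ s, m i ≠ 0) (hco : (s : Set ι).Pairwise (Nat.Coprime on m)) (c : ι → ℕ) :
    ∃ t : ℕ, ∀ n, (∀ i ∈ s, m i ∣ n + c i) ↔ ∏ i ∈ s, m i ∣ n + t := by
  obtain ⟨t, ht⟩ := Nat.chineseRemainderOfFinset c m s hm hco
  refine ⟨t, fun n => ?_⟩
  have hshift : ∀ i ∈ s, m i ∣ n + c i ↔ m i ∣ n + t := fun i hi => by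
    rw [Nat.dvd_iff_mod_eq_zero, Nat.dvd_iff_mod_eq_zero, (ht i hi).add_left n]
  rw [forall₂_congr hshift]
  refine ⟨fun h => ?_, fun h i hi => (dvd_prod_of_mem m hi).trans h⟩
  have hcoZ : (s : Set ι).Pairwise (IsCoprime on fun i => (m i : ℤ)) :=
    hco.mono' fun _ _ h => Nat.isCoprime_iff_coprime.mpr h
  exact_mod_cast prod_dvd_of_coprime hcoZ fun i hi => Int.natCast_dvd_natCast.mpr (h i hi)

theorem sum_prod_ite_eq_sum_powerset {ι κ R : Type*} [DecidableEq κ] [CommRing R]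
    (I : Finset ι) (s : Finset κ) (P : κ → ι → Prop) [∀ q n, Decidable (P q n)]
    (U V : κ → R) :
    ∑ n ∈ I, ∏ q ∈ s, (if P q n then U q else V q) =
      ∑ T ∈ s.powerset,
        (#{n ∈ I | ∀ q ∈ T, P q n} : R) * ((∏ q ∈ T, (U q - V q)) * ∏ q ∈ s \ T, V q) := by
  have hite (q : κ) (n : ι) :
      (if P q n then U q else V q) = (if P q n then 1 else 0) * (U q - V q) + V q := by
    split_ifs <;> ring
  simp_rw [hite, prod_add, prod_mul_distrib, prod_boole]
  rw [sum_comm]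
  refine sum_congr rfl fun T _ => ?_
  simp_rw [mul_assoc, ← sum_mul, sum_boole]

theorem prod_add_mul_one_sub_eq_sum_powerset {κ K : Type*} [DecidableEq κ] [Field K]
    (s : Finset κ) (m : κ → ℕ) (U V : κ → K) :
    ∏ q ∈ s, (1 / (m q : K) * U q + V q * (1 - 1 / m q)) =
      ∑ T ∈ s.powerset,
        1 / ((∏ q ∈ T, m q : ℕ) : K) * ((∏ q ∈ T, (U q - V q)) * ∏ q ∈ s \ T, V q) := by
  have hfactor (q : κ) : 1 / (m q : K) * U q + V q * (1 - 1 / m q) =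
      1 / (m q : K) * (U q - V q) + V q := by ring
  simp_rw [hfactor, prod_add, prod_mul_distrib, Nat.cast_prod, prod_div_distrib, prod_const_one,
    mul_assoc]

theorem abs_card_filter_forall_dvd_add_sub_le {κ : Type*} {T : Finset κ} {m : κ → ℕ}
    (hm : ∀ q ∈ T, m q ≠ 0) (hco : (T : Set κ).Pairwise (Nat.Coprime on m)) (c : κ → ℕ)
    {x : ℝ} (hx : 0 ≤ x) :
    |(#{n ∈ Icc 1 ⌊x⌋₊ | ∀ q ∈ T, m q ∣ n + c q} : ℝ) - x / (∏ q ∈ T, m q : ℕ)| ≤ 2 := by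
  obtain ⟨t, ht⟩ := exists_forall_dvd_add_iff_prod_dvd_add hm hco c
  rw [filter_congr fun n _ => ht n]
  exact abs_card_filter_dvd_add_Icc_floor_sub_le (prod_pos fun q hq => (hm q hq).bot_lt) t hx

theorem abs_sum_prod_ite_dvd_sub_le {κ : Type*} [DecidableEq κ] {s : Finset κ} {m : κ → ℕ}
    (hm : ∀ q ∈ s, m q ≠ 0) (hco : (s : Set κ).Pairwise (Nat.Coprime on m)) (c : κ → ℕ)
    (U V : κ → ℝ) {x : ℝ} (hx : 0 ≤ x) :
    |∑ n ∈ Icc 1 ⌊x⌋₊, ∏ q ∈ s, (if m q ∣ n + c q then U q else V q)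
        - x * ∏ q ∈ s, (1 / (m q : ℝ) * U q + V q * (1 - 1 / m q))|
      ≤ 2 * ∏ q ∈ s, (|U q - V q| + |V q|) := by
  rw [sum_prod_ite_eq_sum_powerset, prod_add_mul_one_sub_eq_sum_powerset, mul_sum,
    ← sum_sub_distrib, prod_add, mul_sum]
  refine (abs_sum_le_sum_abs _ _).trans (sum_le_sum fun T hT => ?_)
  have hTs := mem_powerset.mp hT
  have hcount := abs_card_filter_forall_dvd_add_sub_le (fun q hq => hm q (hTs hq))
    (hco.mono (coe_subset.mpr hTs)) c hx
  rw [← mul_assoc x, mul_one_div, ← sub_mul, abs_mul, abs_mul, abs_prod, abs_prod]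
  gcongr

theorem fp_pow (p n k : ℕ) :
    fp p n ^ k = if p ∣ n then (1 - 1 / (p : ℝ)) ^ k else (-(1 / (p : ℝ))) ^ k := by
  unfold fp
  split_ifs <;> rfl

theorem abs_sub_add_abs_le_three (p k : ℕ) :
    |(1 - 1 / (p : ℝ)) ^ k - (-(1 / (p : ℝ))) ^ k| + |(-(1 / (p : ℝ))) ^ k| ≤ 3 := by
  -- `1 / 0 = 0`, so this also covers `p = 0`
  have hp : 0 ≤ 1 / (p : ℝ) ∧ 1 / (p : ℝ) ≤ 1 :=
    ⟨by positivity, by simpa only [one_div] using Nat.cast_inv_le_one p⟩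
  have hU : |(1 - 1 / (p : ℝ)) ^ k| ≤ 1 := by
    rw [abs_pow]; exact pow_le_one₀ (abs_nonneg _) (abs_le.mpr ⟨by linarith, by linarith⟩)
  have hV : |(-(1 / (p : ℝ))) ^ k| ≤ 1 := by
    rw [abs_pow]; exact pow_le_one₀ (abs_nonneg _) (abs_le.mpr ⟨by linarith, by linarith⟩)
  linarith [abs_sub ((1 - 1 / (p : ℝ)) ^ k) ((-(1 / (p : ℝ))) ^ k)]

theorem card_divisors_prod_of_prime {S : Finset ℕ} (hS : ∀ p ∈ S, p.Prime) :
    #(∏ p ∈ S, p).divisors = 2 ^ #S := by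
  induction S using Finset.induction_on with
  | empty => simp
  | insert p S hpS ih =>
    have hp := hS p (mem_insert_self p S)
    have hcop : Nat.Coprime p (∏ q ∈ S, q) := Nat.Coprime.prod_right fun q hq =>
      (Nat.coprime_primes hp (hS q (mem_insert_of_mem hq))).mpr (ne_of_mem_of_not_mem hq hpS).symm
    rw [prod_insert hpS, Nat.Coprime.card_divisors_mul hcop,
      ih fun q hq => hS q (mem_insert_of_mem hq), hp.divisors, card_pair hp.one_lt.ne,
      card_insert_of_notMem hpS, pow_succ']

theorem pairwise_coprime_sigma_primeFactors {ι : Type*} {s : Finset ι} {a : ι → ℕ}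
    (hco : ∀ i j, i ≠ j → Nat.Coprime (a i) (a j)) :
    ((s.sigma fun i => (a i).primeFactors : Finset _) : Set ((_ : ι) × ℕ)).Pairwise
      (Nat.Coprime on Sigma.snd) := by
  rintro ⟨i, p⟩ hip ⟨j, q⟩ hjq hne
  simp only [coe_sigma, Set.mem_sigma_iff, mem_coe, Nat.mem_primeFactors] at hip hjq
  by_cases hij : i = j
  · subst hij
    exact (Nat.coprime_primes hip.2.1 hjq.2.1).mpr fun hpq => hne (by rw [hpq])
  · exact ((hco i j hij).coprime_dvd_left hip.2.2.1).coprime_dvd_right hjq.2.2.1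

theorem prod_primeFactors_le_card_divisors_sq (a : ℕ) {g : ℕ → ℝ}
    (hg : ∀ p ∈ a.primeFactors, 0 ≤ g p ∧ g p ≤ 4) :
    ∏ p ∈ a.primeFactors, g p ≤ (#(∏ p ∈ a.primeFactors, p).divisors : ℝ) ^ 2 := by
  rw [card_divisors_prod_of_prime fun p hp => Nat.prime_of_mem_primeFactors hp]
  calc ∏ p ∈ a.primeFactors, g p ≤ ∏ _p ∈ a.primeFactors, (4 : ℝ) :=
        prod_le_prod (fun p hp => (hg p hp).1) fun p hp => (hg p hp).2
    _ = ((2 ^ #a.primeFactors : ℕ) : ℝ) ^ 2 := by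
        rw [prod_const]; push_cast; rw [← pow_mul, mul_comm, pow_mul]; norm_num

theorem stmt8_general (r : ℕ) :
    ∃ C : ℝ, ∀ a b : Fin r → ℕ, (∀ i, 1 ≤ a i) →
      (∀ i j, i ≠ j → Nat.Coprime (a i) (a j)) → StrictMono b →
      ∀ x : ℝ, 1 ≤ x →
      |(1/x) * ∑ n ∈ Finset.Icc 1 ⌊x⌋₊, ∏ i, fm (a i) (n + b i)
        - ∏ i, ∏ p ∈ (a i).primeFactors,
            ((1/(p:ℝ)) * (1 - 1/(p:ℝ)) ^ ((a i).factorization p)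
              + (-(1/(p:ℝ))) ^ ((a i).factorization p) * (1 - 1/(p:ℝ)))|
      ≤ C * ((1/x) * ∏ i, (((∏ p ∈ (a i).primeFactors, p).divisors.card : ℝ))^2) := by
  refine ⟨2, fun a b _ hco _ x hx => ?_⟩
  have hx0 : 0 < x := by linarith
  have key := abs_sum_prod_ite_dvd_sub_le (s := univ.sigma fun i => (a i).primeFactors)
    (fun q hq => (Nat.prime_of_mem_primeFactors (mem_sigma.mp hq).2).ne_zero)
    (pairwise_coprime_sigma_primeFactors hco) (fun q => b q.1)
    (fun q => (1 - 1 / (q.2 : ℝ)) ^ (a q.1).factorization q.2)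
    (fun q => (-(1 / (q.2 : ℝ))) ^ (a q.1).factorization q.2) hx0.le
  simp only [prod_sigma] at key
  simp only [fm, fp_pow]
  have herror : ∏ i, ∏ p ∈ (a i).primeFactors,
      (|(1 - 1 / (p : ℝ)) ^ (a i).factorization p - (-(1 / (p : ℝ))) ^ (a i).factorization p|
        + |(-(1 / (p : ℝ))) ^ (a i).factorization p|)
      ≤ ∏ i, (#(∏ p ∈ (a i).primeFactors, p).divisors : ℝ) ^ 2 :=
    prod_le_prod (fun i _ => prod_nonneg fun p _ => by positivity) fun i _ =>
      prod_primeFactors_le_card_divisors_sq (a i) fun p _ =>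
        ⟨by positivity, (abs_sub_add_abs_le_three p _).trans (by norm_num)⟩
  have hscale (S M : ℝ) : |1 / x * S - M| = 1 / x * |S - x * M| := by
    rw [show 1 / x * S - M = 1 / x * (S - x * M) by field_simp, abs_mul,
      abs_of_pos (one_div_pos.mpr hx0)]
  rw [hscale, mul_left_comm]
  gcongr
  exact key.trans (by gcongr)

/-- For pairwise coprime a₁,…,a_r with squarefree parts A₁,…,A_r and b₁ < … < b_r:
(1/x)∑_{n≤x} ∏ f_{aᵢ}(n+bᵢ) = ∏ᵢ ∏_{p^α ∥ aᵢ} ((1/p)(1-1/p)^α + (-1/p)^α(1-1/p))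
 + O((1/x)∏ τ(Aᵢ)²), the implied constant depending only on r. -/
theorem stmt8 (r : ℕ) (hr : 1 ≤ r) :
    ∃ C : ℝ, ∀ a b : Fin r → ℕ, (∀ i, 1 ≤ a i) →
      (∀ i j, i ≠ j → Nat.Coprime (a i) (a j)) → StrictMono b →
      ∀ x : ℝ, 1 ≤ x →
      |(1/x) * ∑ n ∈ Finset.Icc 1 ⌊x⌋₊, ∏ i, fm (a i) (n + b i)
        - ∏ i, ∏ p ∈ (a i).primeFactors,
            ((1/(p:ℝ)) * (1 - 1/(p:ℝ)) ^ ((a i).factorization p)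
              + (-(1/(p:ℝ))) ^ ((a i).factorization p) * (1 - 1/(p:ℝ)))|
      ≤ C * ((1/x) * ∏ i, (((∏ p ∈ (a i).primeFactors, p).divisors.card : ℝ))^2) :=
  stmt8_general r
end
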